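/- arXiv:1301.1256 — 2 statements merged into one kernel-verified Lean document; each statement's English description precedes it below -/
import Mathlib

section
/- Let ℓ ≥ 2 be an integer, let e ∈ [1 − 1/ℓ, 1 − 1/(ℓ+1)], let c = (ℓ + √(ℓ(ℓ − e(ℓ+1))))/(ℓ(ℓ+1)), and let p = 4c(1 − ℓc)/(1 − (ℓ−1)c)². Let g be any graphon with e(g) = e such that, for almost every (x,y): g(x,y) = 1 whenever x < kc < y or y < kc < x for some integer k with 1 ≤ k ≤ ℓ−1; g(x,y) = 0 whenever (k−1)c < x,y < kc for some integer k with 1 ≤ k ≤ ℓ−1; and ∫∫∫_{[(ℓ−1)c,1]³} g(x,y) g(y,z) g(z,x) dx dy dz = 0. Then I(g) ≥ ((1 − (ℓ−1)c)²/2)·I₀(p). -/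
open MeasureTheory Real Set Filter

noncomputable section

/-- `I₀(u) = (1/2)[u ln u + (1-u) ln(1-u)]`, with the convention `log 0 = 0`
    giving `I₀(0) = I₀(1) = 0`. -/
def I0 (u : ℝ) : ℝ := (u * Real.log u + (1 - u) * Real.log (1 - u)) / 2

/-- `I₀'(u) = (1/2)[ln u − ln(1−u)]`. -/
def I0d (u : ℝ) : ℝ := (Real.log u - Real.log (1 - u)) / 2

/-- `I₀''(u) = (1/2)[1/u + 1/(1−u)]`. -/
def I0dd (u : ℝ) : ℝ := (1 / u + 1 / (1 - u)) / 2

/-- A graphon: a measurable, symmetric function `[0,1]² → [0,1]`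
    (here defined on all of `ℝ²`, with values used only on `[0,1]²`). -/
def IsGraphon (g : ℝ → ℝ → ℝ) : Prop :=
  Measurable (Function.uncurry g) ∧ (∀ x y, g x y = g y x) ∧ ∀ x y, g x y ∈ Icc (0 : ℝ) 1

/-- The edge density `e(g) = ∫₀¹∫₀¹ g(x,y) dx dy`. -/
def edgeDensity (g : ℝ → ℝ → ℝ) : ℝ :=
  ∫ x in Icc (0 : ℝ) 1, ∫ y in Icc (0 : ℝ) 1, g x y

/-- The triangle density `t(g) = ∫₀¹∫₀¹∫₀¹ g(x,y) g(y,z) g(z,x) dx dy dz`. -/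
def triangleDensity (g : ℝ → ℝ → ℝ) : ℝ :=
  ∫ x in Icc (0 : ℝ) 1, ∫ y in Icc (0 : ℝ) 1, ∫ z in Icc (0 : ℝ) 1, g x y * g y z * g z x

/-- The rate function `I(g) = ∫₀¹∫₀¹ I₀(g(x,y)) dx dy`. -/
def rate (g : ℝ → ℝ → ℝ) : ℝ :=
  ∫ x in Icc (0 : ℝ) 1, ∫ y in Icc (0 : ℝ) 1, I0 (g x y)

/-- Lebesgue measure restricted to `[0,1]`. -/
def unitMeasure : Measure ℝ := volume.restrict (Icc (0 : ℝ) 1)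

/-- Two graphons are equivalent if they agree a.e. after composing with
    measure-preserving maps of `[0,1]`. -/
def GraphonEquiv (f g : ℝ → ℝ → ℝ) : Prop :=
  ∃ σ σ' : ℝ → ℝ, MeasurePreserving σ unitMeasure unitMeasure ∧
    MeasurePreserving σ' unitMeasure unitMeasure ∧
    ∀ᵐ p ∂(unitMeasure.prod unitMeasure), f (σ p.1) (σ p.2) = g (σ' p.1) (σ' p.2)

end

/-!
Outside the corner `[(ℓ-1)c, 1]²` the graphon is `0` on the diagonal blocks and `1` elsewhere, so
that region contributes nothing to `I(g)`, and the edge density pins down the mass of `g` on the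
corner: `∫∫_corner g = 2c(1 - ℓc)`. On the corner `g` is triangle-free, so by Mantel's theorem its
support has measure at most `(1 - (ℓ-1)c)²/2`. Jensen's inequality on the support, together with the
monotonicity of `t ↦ t · I₀(m/t)`, gives the bound.
-/

open Function

@[simp] lemma I0_zero : I0 0 = 0 := by simp [I0]

@[simp] lemma I0_one : I0 1 = 0 := by simp [I0]

lemma continuous_I0 : Continuous I0 :=
  (continuous_mul_log.add
    (continuous_mul_log.comp (continuous_const.sub continuous_id))).div_const 2

lemma convexOn_I0 : ConvexOn ℝ (Icc 0 1) I0 := by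
  have hleft : ConvexOn ℝ (Icc (0 : ℝ) 1) fun u => u * log u :=
    convexOn_mul_log.subset Icc_subset_Ici_self (convex_Icc 0 1)
  have hright : ConvexOn ℝ (Icc (0 : ℝ) 1) fun u => (1 - u) * log (1 - u) := by
    have h := convexOn_mul_log.comp_affineMap (AffineMap.lineMap (1 : ℝ) 0)
    simp only [comp_def, AffineMap.lineMap_apply_ring, mul_one, mul_zero, add_zero] at h
    exact h.subset (fun u hu => by simpa [AffineMap.lineMap_apply_ring] using hu.2) (convex_Icc 0 1)
  have hI0 : I0 = fun u => (2 : ℝ)⁻¹ • (u * log u + (1 - u) * log (1 - u)) := by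
    funext u; rw [I0, smul_eq_mul]; ring
  exact hI0 ▸ (hleft.add hright).smul (by norm_num)

lemma I0_mul_le {t u : ℝ} (ht : t ∈ Icc (0 : ℝ) 1) (hu : u ∈ Icc (0 : ℝ) 1) :
    I0 (t * u) ≤ t * I0 u := by
  simpa using convexOn_I0.2 hu (left_mem_Icc.2 zero_le_one) ht.1 (sub_nonneg.2 ht.2) (by ring)

lemma mul_I0_div_le_mul_I0_div {m A B : ℝ} (hm : 0 ≤ m) (hmA : m ≤ A) (hAB : A ≤ B) (hA : 0 < A) :
    B * I0 (m / B) ≤ A * I0 (m / A) := by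
  have hB : 0 < B := hA.trans_le hAB
  have h := I0_mul_le ⟨div_nonneg hA.le hB.le, (div_le_one hB).2 hAB⟩
    ⟨div_nonneg hm hA.le, (div_le_one hA).2 hmA⟩
  rw [show A / B * (m / A) = m / B by field_simp] at h
  calc B * I0 (m / B) ≤ B * (A / B * I0 (m / A)) := by gcongr
    _ = A * I0 (m / A) := by field_simp

section Integral

variable {α : Type*} [MeasurableSpace α] {ν : Measure α} [IsFiniteMeasure ν] {f : α → ℝ}

lemma integrable_of_mem_Icc (hf : Measurable f) (hf01 : ∀ x, f x ∈ Icc (0 : ℝ) 1) :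
    Integrable f ν :=
  .of_bound hf.aestronglyMeasurable 1 <| ae_of_all _ fun x => by
    rw [Real.norm_of_nonneg (hf01 x).1]; exact (hf01 x).2

lemma integrable_I0_comp (hf : Measurable f) (hf01 : ∀ x, f x ∈ Icc (0 : ℝ) 1) :
    Integrable (fun x => I0 (f x)) ν := by
  obtain ⟨C, hC⟩ := isCompact_Icc.exists_bound_of_continuousOn continuous_I0.continuousOn
  exact .of_bound (continuous_I0.measurable.comp hf).aestronglyMeasurable C
    (ae_of_all _ fun x => hC _ (hf01 x))

/-- Jensen's inequality on `support f`, then monotonicity of `t ↦ t * I0 (m / t)`. -/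
theorem mul_I0_integral_div_le_integral_I0 (hf : Measurable f) (hf01 : ∀ x, f x ∈ Icc (0 : ℝ) 1)
    {B : ℝ} (hB : ν.real (support f) ≤ B) :
    B * I0 ((∫ x, f x ∂ν) / B) ≤ ∫ x, I0 (f x) ∂ν := by
  set S := support f
  have hfS : ∫ x in S, f x ∂ν = ∫ x, f x ∂ν :=
    setIntegral_eq_integral_of_ae_compl_eq_zero (ae_of_all _ fun x hx => notMem_support.1 hx)
  have hI0S : ∫ x in S, I0 (f x) ∂ν = ∫ x, I0 (f x) ∂ν :=
    setIntegral_eq_integral_of_ae_compl_eq_zero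
      (ae_of_all _ fun x hx => by rw [notMem_support.1 hx, I0_zero])
  rcases measureReal_nonneg.eq_or_lt with hA | hA
  · have hν : ν.restrict S = 0 := Measure.restrict_eq_zero.2 <|
      (measureReal_eq_zero_iff (measure_ne_top _ _)).1 hA.symm
    rw [← hfS, ← hI0S, hν]
    simp
  · have : NeZero (ν.restrict S) :=
      ⟨fun h => hA.ne' (by simp [measureReal_def, Measure.restrict_eq_zero.1 h])⟩
    have hjensen := convexOn_I0.map_average_le continuous_I0.continuousOn isClosed_Icc
      (ae_of_all _ hf01) (integrable_of_mem_Icc (ν := ν.restrict S) hf hf01)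
      (integrable_I0_comp hf hf01)
    rw [setAverage_eq, setAverage_eq, smul_eq_mul, smul_eq_mul, hfS, hI0S, inv_mul_eq_div,
      le_inv_mul_iff₀ hA] at hjensen
    have hmA : ∫ x, f x ∂ν ≤ ν.real S :=
      calc ∫ x, f x ∂ν = ∫ x in S, f x ∂ν := hfS.symm
        _ ≤ ∫ _ in S, 1 ∂ν :=
          integral_mono (integrable_of_mem_Icc hf hf01) (integrable_const 1) fun x => (hf01 x).2
        _ = ν.real S := by simp
    calc B * I0 ((∫ x, f x ∂ν) / B) ≤ ν.real S * I0 ((∫ x, f x ∂ν) / ν.real S) :=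
          mul_I0_div_le_mul_I0_div (integral_nonneg fun x => (hf01 x).1) hmA hB hA
      _ ≤ _ := hjensen

end Integral

section Mantel

variable {α : Type*} [MeasurableSpace α] {μ : Measure α} {S : Set (α × α)}

def graphDegree (μ : Measure α) (S : Set (α × α)) (x : α) : ℝ := μ.real (Prod.mk x ⁻¹' S)

lemma graphDegree_nonneg (x : α) : 0 ≤ graphDegree μ S x := measureReal_nonneg

variable [IsFiniteMeasure μ]

lemma sq_integral_le_measureReal_univ_mul_integral_sq {f : α → ℝ} (hf : Integrable f μ)
    (hf2 : Integrable (fun x => f x ^ 2) μ) :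
    (∫ x, f x ∂μ) ^ 2 ≤ μ.real univ * ∫ x, f x ^ 2 ∂μ := by
  rcases eq_zero_or_neZero μ with rfl | _
  · simp
  have hjensen := (Even.convexOn_pow even_two).map_average_le (continuous_pow 2).continuousOn
    isClosed_univ (ae_of_all _ fun _ => mem_univ _) hf hf2
  have hs := measureReal_univ_pos (μ := μ)
  rw [average_eq, average_eq, smul_eq_mul, smul_eq_mul] at hjensen
  field_simp at hjensen
  exact hjensen

lemma measurable_graphDegree (hS : MeasurableSet S) : Measurable (graphDegree μ S) :=
  (measurable_measure_prodMk_left hS).ennreal_toReal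

lemma graphDegree_le (x : α) : graphDegree μ S x ≤ μ.real univ := measureReal_mono (subset_univ _)

lemma integrable_graphDegree (hS : MeasurableSet S) : Integrable (graphDegree μ S) μ :=
  .of_bound (measurable_graphDegree hS).aestronglyMeasurable (μ.real univ) <|
    ae_of_all _ fun x => by
    rw [Real.norm_of_nonneg (graphDegree_nonneg x)]; exact graphDegree_le x

lemma integral_indicator_comp_fst (hS : MeasurableSet S) {h : α → ℝ} (hh : Integrable h μ) :
    ∫ q, S.indicator (fun q => h q.1) q ∂μ.prod μ = ∫ x, graphDegree μ S x * h x ∂μ := by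
  rw [integral_prod _ ((hh.comp_fst μ).indicator hS)]
  congr with x
  exact (integral_indicator_const (h x) (measurable_prodMk_left hS)).trans (smul_eq_mul _ _)

lemma measureReal_prod_eq_integral_graphDegree (hS : MeasurableSet S) :
    (μ.prod μ).real S = ∫ x, graphDegree μ S x ∂μ := by
  simpa [integral_indicator_const _ hS] using
    integral_indicator_comp_fst hS (integrable_const (μ := μ) (1 : ℝ))

lemma graphDegree_add_graphDegree_le (hS : MeasurableSet S) {x y : α}
    (hxy : μ (Prod.mk x ⁻¹' S ∩ Prod.mk y ⁻¹' S) = 0) :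
    graphDegree μ S x + graphDegree μ S y ≤ μ.real univ := by
  have h := measureReal_union_add_inter (μ := μ) (s := Prod.mk x ⁻¹' S)
    (t := Prod.mk y ⁻¹' S) (measurable_prodMk_left hS)
  rw [measureReal_def _ (_ ∩ _), hxy, ENNReal.toReal_zero, add_zero] at h
  exact h ▸ measureReal_mono (subset_univ _)

lemma integral_indicator_graphDegree_add (hS : MeasurableSet S) (hsymm : ∀ q, q.swap ∈ S ↔ q ∈ S) :
    ∫ q, S.indicator (fun q => graphDegree μ S q.1 + graphDegree μ S q.2) q ∂μ.prod μ =
      2 * ∫ x, graphDegree μ S x ^ 2 ∂μ := by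
  have hD := integrable_graphDegree (μ := μ) hS
  have hswap : ∫ q, S.indicator (fun q => graphDegree μ S q.2) q ∂μ.prod μ =
      ∫ q, S.indicator (fun q => graphDegree μ S q.1) q ∂μ.prod μ := by
    rw [← integral_prod_swap]
    congr with q
    by_cases hq : q ∈ S
    · rw [indicator_of_mem ((hsymm q).2 hq), indicator_of_mem hq]; rfl
    · rw [indicator_of_notMem (mt (hsymm q).1 hq), indicator_of_notMem hq]
  rw [indicator_add,
    integral_add ((hD.comp_fst μ).indicator hS) ((hD.comp_snd μ).indicator hS), hswap,
    integral_indicator_comp_fst hS hD]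
  simp only [← sq]
  ring

/-- Mantel's theorem. Double counting over `S` gives `2 ∫ d² ≤ μ(α) |S|` for the degree `d`, since
`d x + d y ≤ μ(α)` on edges, and Cauchy–Schwarz gives `|S|² ≤ μ(α) ∫ d²`. -/
theorem measureReal_le_of_triangleFree (hS : MeasurableSet S) (hsymm : ∀ q, q.swap ∈ S ↔ q ∈ S)
    (htf : ∀ᵐ q ∂μ.prod μ, q ∈ S → μ (Prod.mk q.1 ⁻¹' S ∩ Prod.mk q.2 ⁻¹' S) = 0) :
    (μ.prod μ).real S ≤ μ.real univ ^ 2 / 2 := by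
  set s := μ.real univ
  have hD := integrable_graphDegree (μ := μ) hS
  have hD2 : Integrable (fun x => graphDegree μ S x ^ 2) μ :=
    .of_bound ((measurable_graphDegree hS).pow_const 2).aestronglyMeasurable (s ^ 2) <|
      ae_of_all _ fun x => by
        rw [Real.norm_of_nonneg (sq_nonneg _)]
        exact pow_le_pow_left₀ (graphDegree_nonneg x) (graphDegree_le x) 2
  have hcount : 2 * ∫ x, graphDegree μ S x ^ 2 ∂μ ≤ s * (μ.prod μ).real S := by
    rw [← integral_indicator_graphDegree_add hS hsymm]
    calc _ ≤ ∫ q, S.indicator (fun _ => s) q ∂μ.prod μ := by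
          refine integral_mono_ae (((hD.comp_fst μ).add (hD.comp_snd μ)).indicator hS)
            ((integrable_const s).indicator hS) ?_
          filter_upwards [htf] with q hq
          by_cases hqS : q ∈ S
          · simpa [hqS] using graphDegree_add_graphDegree_le hS (hq hqS)
          · simp [hqS]
      _ = s * (μ.prod μ).real S := by rw [integral_indicator_const _ hS, smul_eq_mul, mul_comm]
  have hCS := sq_integral_le_measureReal_univ_mul_integral_sq hD hD2
  rw [← measureReal_prod_eq_integral_graphDegree hS] at hCS
  have hs : 0 ≤ s := measureReal_nonneg
  rcases (measureReal_nonneg (μ := μ.prod μ) (s := S)).eq_or_lt with hA | hA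
  · rw [← hA]; positivity
  · nlinarith [mul_le_mul_of_nonneg_left hcount hs]

end Mantel

section Graphon

variable {α : Type*} [MeasurableSpace α] {μ : Measure α} [IsFiniteMeasure μ] {g : α → α → ℝ}

lemma ae_measure_commonNeighbors_eq_zero (hg : Measurable (uncurry g))
    (hsymm : ∀ x y, g x y = g y x) (hg01 : ∀ x y, g x y ∈ Icc (0 : ℝ) 1)
    (htri : ∫ x, ∫ y, ∫ z, g x y * g y z * g z x ∂μ ∂μ ∂μ = 0) :
    ∀ᵐ q ∂μ.prod μ, q ∈ support (uncurry g) →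
      μ (Prod.mk q.1 ⁻¹' support (uncurry g) ∩ Prod.mk q.2 ⁻¹' support (uncurry g)) = 0 := by
  set T : α × α → α → ℝ := fun q z => g q.1 q.2 * g q.2 z * g z q.1
  have hT01 (q : α × α) (z : α) : T q z ∈ Icc (0 : ℝ) 1 :=
    unitInterval.mul_mem (unitInterval.mul_mem (hg01 _ _) (hg01 _ _)) (hg01 _ _)
  have hT : Measurable (uncurry T) :=
    ((hg.comp (measurable_fst.fst.prodMk measurable_fst.snd)).mul
      (hg.comp (measurable_fst.snd.prodMk measurable_snd))).mul
      (hg.comp (measurable_snd.prodMk measurable_fst.fst))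
  have hTint (q : α × α) : Integrable (T q) μ :=
    integrable_of_mem_Icc hT.of_uncurry_left (hT01 q)
  have hIT : Integrable (fun q => ∫ z, T q z ∂μ) (μ.prod μ) :=
    .of_bound hT.stronglyMeasurable.integral_prod_right'.aestronglyMeasurable (1 * μ.real univ) <|
      ae_of_all _ fun q => norm_integral_le_of_norm_le_const <| ae_of_all _ fun z => by
        rw [Real.norm_of_nonneg (hT01 q z).1]; exact (hT01 q z).2
  rw [integral_integral (f := fun x y => ∫ z, T (x, y) z ∂μ) hIT] at htri
  filter_upwards [(integral_eq_zero_iff_of_nonneg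
    (fun q => integral_nonneg (hT01 q · |>.1)) hIT).1 htri] with q hq hqS
  have hz := (integral_eq_zero_iff_of_nonneg (hT01 q · |>.1) (hTint q)).1 hq
  refine measure_mono_null (fun z ⟨h1, h2⟩ => ?_) (ae_iff.1 hz)
  show g q.1 q.2 * g q.2 z * g z q.1 ≠ 0
  rw [hsymm z q.1]
  exact mul_ne_zero (mul_ne_zero hqS h2) h1

theorem mul_I0_le_integral_I0_of_triangleFree (hg : Measurable (uncurry g))
    (hsymm : ∀ x y, g x y = g y x) (hg01 : ∀ x y, g x y ∈ Icc (0 : ℝ) 1)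
    (htri : ∫ x, ∫ y, ∫ z, g x y * g y z * g z x ∂μ ∂μ ∂μ = 0) :
    μ.real univ ^ 2 / 2 * I0 ((∫ q, g q.1 q.2 ∂μ.prod μ) / (μ.real univ ^ 2 / 2)) ≤
      ∫ q, I0 (g q.1 q.2) ∂μ.prod μ :=
  mul_I0_integral_div_le_integral_I0 (f := uncurry g) hg (fun q => hg01 q.1 q.2) <|
    measureReal_le_of_triangleFree (measurableSet_support hg)
      (fun q => show g q.2 q.1 ≠ 0 ↔ g q.1 q.2 ≠ 0 by rw [hsymm])
      (ae_measure_commonNeighbors_eq_zero hg hsymm hg01 htri)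

end Graphon

lemma scallop_parameters {L e c : ℝ} (hL : 0 < L) (he : e ∈ Icc (1 - 1 / L) (1 - 1 / (L + 1)))
    (hc : c = (L + √(L * (L - e * (L + 1)))) / (L * (L + 1))) :
    0 < c ∧ L * c ≤ 1 ∧ e = 2 * L * c - L * (L + 1) * c ^ 2 := by
  set r := L * (L - e * (L + 1)) with hr
  have hlow : L - 1 ≤ e * L := by
    have h := mul_le_mul_of_nonneg_right he.1 hL.le
    rwa [sub_mul, one_div_mul_cancel hL.ne', one_mul] at h
  have hup : e * (L + 1) ≤ L := by
    have h := mul_le_mul_of_nonneg_right he.2 (by positivity : (0 : ℝ) ≤ L + 1)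
    rwa [sub_mul, one_div_mul_cancel (by positivity), one_mul, add_sub_cancel_right] at h
  have hr0 : 0 ≤ r := mul_nonneg hL.le (by linarith)
  have hsqrt : √r ≤ 1 := Real.sqrt_le_one.2 (by nlinarith)
  have hcr : √r = c * (L * (L + 1)) - L := by rw [hc]; field_simp; ring
  refine ⟨hc ▸ by positivity, ?_, ?_⟩
  · rw [hc, ← mul_div_assoc, div_le_one (by positivity)]
    nlinarith [Real.sqrt_nonneg r]
  · have hsq : r = (c * (L * (L + 1)) - L) ^ 2 := by rw [← hcr, Real.sq_sqrt hr0]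
    have hL1 : L * (L + 1) ≠ 0 := by positivity
    apply mul_right_cancel₀ hL1
    linear_combination hr - hsq

instance : IsProbabilityMeasure unitMeasure := ⟨by simp [unitMeasure]⟩

lemma unitMeasure_real_of_subset {s : Set ℝ} (hs : MeasurableSet s) (hsub : s ⊆ Icc 0 1) :
    unitMeasure.real s = volume.real s := by
  rw [unitMeasure, measureReal_restrict_apply hs, inter_eq_left.2 hsub]

lemma unitMeasure_prod_restrict_corner {a : ℝ} (ha : 0 ≤ a) :
    (unitMeasure.prod unitMeasure).restrict (Icc a 1 ×ˢ Icc a 1) =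
      (volume.restrict (Icc a 1)).prod (volume.restrict (Icc a 1)) := by
  have h : Icc a 1 ⊆ Icc 0 1 := Icc_subset_Icc_left ha
  rw [unitMeasure, Measure.prod_restrict, Measure.prod_restrict,
    Measure.restrict_restrict (measurableSet_Icc.prod measurableSet_Icc),
    inter_eq_left.2 (prod_mono h h)]

lemma integral_integral_unitInterval {f : ℝ → ℝ → ℝ}
    (hf : Integrable (uncurry f) (unitMeasure.prod unitMeasure)) :
    ∫ x in Icc (0 : ℝ) 1, ∫ y in Icc (0 : ℝ) 1, f x y =
      ∫ q, f q.1 q.2 ∂unitMeasure.prod unitMeasure :=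
  integral_integral hf

def scallopPart (c : ℝ) (k : ℕ) : Set ℝ := Ioo (((k : ℝ) - 1) * c) (k * c)

def scallopBlocks (ℓ : ℕ) (c : ℝ) : Set (ℝ × ℝ) :=
  ⋃ k ∈ Finset.Icc 1 (ℓ - 1), scallopPart c k ×ˢ scallopPart c k

section Scallop

variable {ℓ : ℕ} {c : ℝ}

lemma mem_scallopBlocks {q : ℝ × ℝ} :
    q ∈ scallopBlocks ℓ c ↔ ∃ k : ℕ, 1 ≤ k ∧ k ≤ ℓ - 1 ∧
      (((k : ℝ) - 1) * c < q.1 ∧ q.1 < k * c ∧ ((k : ℝ) - 1) * c < q.2 ∧ q.2 < k * c) := by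
  simp only [scallopBlocks, scallopPart, mem_iUnion, exists_prop, Finset.mem_Icc, mem_prod, mem_Ioo,
    and_assoc]

lemma measurableSet_scallopBlocks : MeasurableSet (scallopBlocks ℓ c) :=
  .biUnion (Finset.countable_toSet _) fun _ _ => measurableSet_Ioo.prod measurableSet_Ioo

lemma natCast_mul_le_sub_one_mul (hc : 0 ≤ c) {j k : ℕ} (hjk : j < k) :
    (j : ℝ) * c ≤ ((k : ℝ) - 1) * c := by
  gcongr
  rw [le_sub_iff_add_le]
  exact_mod_cast hjk

lemma disjoint_scallopPart (hc : 0 ≤ c) {j k : ℕ} (hjk : j < k) :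
    Disjoint (scallopPart c j) (scallopPart c k) :=
  disjoint_left.2 fun _ hj hk => (hj.2.trans_le (natCast_mul_le_sub_one_mul hc hjk)).not_gt hk.1

lemma exists_scallopPart (hℓ : 1 ≤ ℓ) (hc : 0 < c) {x : ℝ} (hx : 0 ≤ x)
    (hgrid : ∀ k : ℕ, x ≠ k * c) :
    ∃ k : ℕ, 1 ≤ k ∧ k ≤ ℓ ∧ ((k : ℝ) - 1) * c < x ∧ (k < ℓ → x < k * c) := by
  set n := ⌊x / c⌋₊
  have hn : n * c ≤ x := (le_div_iff₀ hc).1 (Nat.floor_le (div_nonneg hx hc.le))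
  have hn' : x < (n + 1) * c := (div_lt_iff₀ hc).1 (Nat.lt_floor_add_one _)
  rcases lt_or_ge n ℓ with hnℓ | hnℓ
  · refine ⟨n + 1, by omega, by omega, ?_, fun _ => by push_cast; exact hn'⟩
    push_cast
    exact (add_sub_cancel_right (n : ℝ) 1).symm ▸ hn.lt_of_ne (hgrid n).symm
  · refine ⟨ℓ, hℓ, le_rfl, ?_, fun h => absurd h (lt_irrefl _)⟩
    have : (ℓ : ℝ) ≤ n := by exact_mod_cast hnℓ
    nlinarith

lemma scallop_trichotomy (hℓ : 1 ≤ ℓ) (hc : 0 < c) {x y : ℝ} (hx : 0 ≤ x) (hy : 0 ≤ y)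
    (hxg : ∀ k : ℕ, x ≠ k * c) (hyg : ∀ k : ℕ, y ≠ k * c) :
    (((ℓ : ℝ) - 1) * c < x ∧ ((ℓ : ℝ) - 1) * c < y) ∨ (x, y) ∈ scallopBlocks ℓ c ∨
      ∃ k : ℕ, 1 ≤ k ∧ k ≤ ℓ - 1 ∧ ((x < k * c ∧ k * c < y) ∨ (y < k * c ∧ k * c < x)) := by
  obtain ⟨j, hj1, hjℓ, hxj, hxj'⟩ := exists_scallopPart hℓ hc hx hxg
  obtain ⟨k, hk1, hkℓ, hyk, hyk'⟩ := exists_scallopPart hℓ hc hy hyg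
  rcases lt_trichotomy j k with hjk | rfl | hkj
  · exact Or.inr <| Or.inr ⟨j, hj1, by omega,
      Or.inl ⟨hxj' (by omega), (natCast_mul_le_sub_one_mul hc.le hjk).trans_lt hyk⟩⟩
  · rcases hjℓ.lt_or_eq with hjℓ | rfl
    · exact Or.inr <| Or.inl <| mem_scallopBlocks.2
        ⟨j, hj1, by omega, hxj, hxj' hjℓ, hyk, hyk' hjℓ⟩
    · exact Or.inl ⟨hxj, hyk⟩
  · exact Or.inr <| Or.inr ⟨k, hk1, by omega,
      Or.inr ⟨hyk' (by omega), (natCast_mul_le_sub_one_mul hc.le hkj).trans_lt hxj⟩⟩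

lemma scallopBlocks_subset_compl_corner (hc : 0 ≤ c) :
    scallopBlocks ℓ c ⊆ (Icc (((ℓ : ℝ) - 1) * c) 1 ×ˢ Icc (((ℓ : ℝ) - 1) * c) 1)ᶜ := by
  intro q hq hK
  obtain ⟨k, hk1, hkℓ, -, hk, -⟩ := mem_scallopBlocks.1 hq
  linarith [hK.1.1, natCast_mul_le_sub_one_mul hc (by omega : k < ℓ)]

lemma measureReal_scallopBlocks (hℓ : 1 ≤ ℓ) (hc : 0 ≤ c) (h : ((ℓ : ℝ) - 1) * c ≤ 1) :
    (unitMeasure.prod unitMeasure).real (scallopBlocks ℓ c) = ((ℓ : ℝ) - 1) * c ^ 2 := by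
  have hpart (k : ℕ) (hk : k ∈ Finset.Icc 1 (ℓ - 1)) : unitMeasure.real (scallopPart c k) = c := by
    rw [Finset.mem_Icc] at hk
    have hk1 : (1 : ℝ) ≤ k := by exact_mod_cast hk.1
    have hkℓ : (k : ℝ) * c ≤ ((ℓ : ℝ) - 1) * c :=
      natCast_mul_le_sub_one_mul hc (by omega)
    rw [scallopPart, unitMeasure_real_of_subset measurableSet_Ioo
      (Ioo_subset_Icc_self.trans (Icc_subset_Icc (by nlinarith) (by linarith))),
      Real.volume_real_Ioo_of_le (by nlinarith)]
    ring
  have hdisj : (↑(Finset.Icc 1 (ℓ - 1)) : Set ℕ).PairwiseDisjoint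
      fun k => scallopPart c k ×ˢ scallopPart c k := by
    intro j _ k _ hjk
    rcases hjk.lt_or_gt with hlt | hgt
    · exact (disjoint_scallopPart hc hlt).set_prod_left _ _
    · exact ((disjoint_scallopPart hc hgt).set_prod_left _ _).symm
  rw [scallopBlocks, measureReal_biUnion_finset hdisj
    (fun _ _ => measurableSet_Ioo.prod measurableSet_Ioo),
    Finset.sum_congr rfl fun k hk => by rw [measureReal_prod_prod, hpart k hk],
    Finset.sum_const, Nat.card_Icc, nsmul_eq_mul, Nat.add_sub_cancel, Nat.cast_sub hℓ, Nat.cast_one,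
    sq]

lemma ae_ne_natCast_mul (c : ℝ) : ∀ᵐ t ∂unitMeasure, ∀ k : ℕ, t ≠ k * c := by
  filter_upwards [ae_restrict_of_ae ((countable_range fun k : ℕ => (k : ℝ) * c).ae_notMem volume)]
    with t ht k hk
  exact ht ⟨k, hk.symm⟩

lemma ae_eq_indicator_compl_scallopBlocks (hℓ : 1 ≤ ℓ) (hc : 0 < c) {g : ℝ → ℝ → ℝ}
    (hblocks : ∀ᵐ q ∂(unitMeasure.prod unitMeasure),
      (∀ k : ℕ, 1 ≤ k → k ≤ ℓ - 1 →
        ((q.1 < (k : ℝ) * c ∧ (k : ℝ) * c < q.2) ∨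
         (q.2 < (k : ℝ) * c ∧ (k : ℝ) * c < q.1)) → g q.1 q.2 = 1) ∧
      (∀ k : ℕ, 1 ≤ k → k ≤ ℓ - 1 →
        (((k : ℝ) - 1) * c < q.1 ∧ q.1 < (k : ℝ) * c ∧
         ((k : ℝ) - 1) * c < q.2 ∧ q.2 < (k : ℝ) * c) → g q.1 q.2 = 0)) :
    ∀ᵐ q ∂unitMeasure.prod unitMeasure,
      q ∉ Icc (((ℓ : ℝ) - 1) * c) 1 ×ˢ Icc (((ℓ : ℝ) - 1) * c) 1 →
        g q.1 q.2 = (scallopBlocks ℓ c)ᶜ.indicator 1 q := by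
  have hfst := Measure.quasiMeasurePreserving_fst (μ := unitMeasure) (ν := unitMeasure)
  have hsnd := Measure.quasiMeasurePreserving_snd (μ := unitMeasure) (ν := unitMeasure)
  have hunit : ∀ᵐ t ∂unitMeasure, t ∈ Icc (0 : ℝ) 1 := ae_restrict_mem measurableSet_Icc
  filter_upwards [hblocks, hfst.ae hunit, hsnd.ae hunit, hfst.ae (ae_ne_natCast_mul c),
    hsnd.ae (ae_ne_natCast_mul c)] with q ⟨hone, hzero⟩ hx hy hxg hyg hK
  rcases scallop_trichotomy hℓ hc hx.1 hy.1 hxg hyg with hcorner | hB | ⟨k, hk1, hkℓ, hsep⟩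
  · exact absurd ⟨⟨hcorner.1.le, hx.2⟩, hcorner.2.le, hy.2⟩ hK
  · obtain ⟨k, hk1, hkℓ, hk⟩ := mem_scallopBlocks.1 hB
    rw [indicator_of_notMem (not_not.2 hB), hzero k hk1 hkℓ hk]
  · have hB : q ∉ scallopBlocks ℓ c := fun hB => by
      obtain ⟨j, hj1, hjℓ, hj⟩ := mem_scallopBlocks.1 hB
      simpa [hone k hk1 hkℓ hsep] using hzero j hj1 hjℓ hj
    rw [indicator_of_mem hB, hone k hk1 hkℓ hsep, Pi.one_apply]

end Scallop

section Corner

variable {g : ℝ → ℝ → ℝ} {a : ℝ} {B : Set (ℝ × ℝ)}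

lemma rate_eq_integral_corner (hg : IsGraphon g) (ha : 0 ≤ a)
    (hoff : ∀ᵐ q ∂unitMeasure.prod unitMeasure,
      q ∉ Icc a 1 ×ˢ Icc a 1 → g q.1 q.2 = Bᶜ.indicator 1 q) :
    rate g = ∫ q, I0 (g q.1 q.2) ∂(volume.restrict (Icc a 1)).prod (volume.restrict (Icc a 1)) := by
  rw [← unitMeasure_prod_restrict_corner ha, setIntegral_eq_integral_of_ae_compl_eq_zero]
  · exact integral_integral_unitInterval (integrable_I0_comp hg.1 fun q => hg.2.2 q.1 q.2)
  · filter_upwards [hoff] with q hq hK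
    rw [hq hK]
    by_cases hB : q ∈ Bᶜ <;> simp [hB]

lemma edgeDensity_eq_integral_corner_add (hg : IsGraphon g) (ha : 0 ≤ a) (ha1 : a ≤ 1)
    (hB : MeasurableSet B) (hBK : B ⊆ (Icc a 1 ×ˢ Icc a 1)ᶜ)
    (hoff : ∀ᵐ q ∂unitMeasure.prod unitMeasure,
      q ∉ Icc a 1 ×ˢ Icc a 1 → g q.1 q.2 = Bᶜ.indicator 1 q) :
    edgeDensity g = ∫ q, g q.1 q.2 ∂(volume.restrict (Icc a 1)).prod (volume.restrict (Icc a 1)) +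
      (1 - (1 - a) ^ 2 - (unitMeasure.prod unitMeasure).real B) := by
  have hK : MeasurableSet (Icc a 1 ×ˢ Icc a 1) := measurableSet_Icc.prod measurableSet_Icc
  have hint : Integrable (fun q : ℝ × ℝ => g q.1 q.2) (unitMeasure.prod unitMeasure) :=
    integrable_of_mem_Icc hg.1 fun q => hg.2.2 q.1 q.2
  have hunit : unitMeasure.real (Icc a 1) = 1 - a := by
    rw [unitMeasure_real_of_subset measurableSet_Icc (Icc_subset_Icc_left ha),
      Real.volume_real_Icc_of_le ha1]
  rw [edgeDensity, integral_integral_unitInterval hint, ← integral_add_compl hK hint,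
    unitMeasure_prod_restrict_corner ha, setIntegral_congr_ae hK.compl (hoff.mono fun q hq => hq),
    integral_indicator_one hB.compl, measureReal_restrict_apply hB.compl, inter_comm, ← sdiff_eq,
    measureReal_sdiff hBK hB, measureReal_compl hK, measureReal_prod_prod, hunit, probReal_univ]
  ring

end Corner

/-- lower bound `I(g) ≥ ((1−(ℓ−1)c)²/2)·I₀(p)` for graphons of the
    multipartite form on the `ℓ`-th scallop. -/
theorem rate_lower_bound_on_scallop (ℓ : ℕ) (hℓ : 2 ≤ ℓ) (e c p : ℝ)
    (he : e ∈ Icc (1 - 1 / (ℓ : ℝ)) (1 - 1 / ((ℓ : ℝ) + 1)))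
    (hc : c = ((ℓ : ℝ) + Real.sqrt ((ℓ : ℝ) * ((ℓ : ℝ) - e * ((ℓ : ℝ) + 1)))) /
      ((ℓ : ℝ) * ((ℓ : ℝ) + 1)))
    (hp : p = 4 * c * (1 - (ℓ : ℝ) * c) / (1 - ((ℓ : ℝ) - 1) * c) ^ 2)
    (g : ℝ → ℝ → ℝ) (hg : IsGraphon g) (hge : edgeDensity g = e)
    (hblocks : ∀ᵐ q ∂(unitMeasure.prod unitMeasure),
      (∀ k : ℕ, 1 ≤ k → k ≤ ℓ - 1 →
        ((q.1 < (k : ℝ) * c ∧ (k : ℝ) * c < q.2) ∨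
         (q.2 < (k : ℝ) * c ∧ (k : ℝ) * c < q.1)) → g q.1 q.2 = 1) ∧
      (∀ k : ℕ, 1 ≤ k → k ≤ ℓ - 1 →
        (((k : ℝ) - 1) * c < q.1 ∧ q.1 < (k : ℝ) * c ∧
         ((k : ℝ) - 1) * c < q.2 ∧ q.2 < (k : ℝ) * c) → g q.1 q.2 = 0))
    (htri : ∫ x in Icc (((ℓ : ℝ) - 1) * c) 1, ∫ y in Icc (((ℓ : ℝ) - 1) * c) 1,
      ∫ z in Icc (((ℓ : ℝ) - 1) * c) 1, g x y * g y z * g z x = 0) :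
    rate g ≥ (1 - ((ℓ : ℝ) - 1) * c) ^ 2 / 2 * I0 p := by
  have hℓ1 : 1 ≤ ℓ := by omega
  have hℓ1' : (1 : ℝ) ≤ ℓ := by exact_mod_cast hℓ1
  obtain ⟨hc0, hℓc, he_eq⟩ := scallop_parameters (by linarith) he hc
  set a := ((ℓ : ℝ) - 1) * c
  have ha0 : 0 ≤ a := mul_nonneg (by linarith) hc0.le
  have ha1 : a < 1 := by linarith
  have hoff := ae_eq_indicator_compl_scallopBlocks hℓ1 hc0 hblocks
  have hedge := edgeDensity_eq_integral_corner_add hg ha0 ha1.le measurableSet_scallopBlocks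
    (scallopBlocks_subset_compl_corner hc0.le) hoff
  rw [hge, measureReal_scallopBlocks hℓ1 hc0.le ha1.le] at hedge
  have hcorner := mul_I0_le_integral_I0_of_triangleFree hg.1 hg.2.1 hg.2.2 htri
  rw [measureReal_restrict_apply_univ, Real.volume_real_Icc_of_le ha1.le] at hcorner
  rw [ge_iff_le, rate_eq_integral_corner hg ha0 hoff]
  convert hcorner using 3
  have : 1 - a ≠ 0 := by linarith
  rw [hp]
  field_simp
  linear_combination 2 * hedge - 2 * he_eq
end

section
/- Let 0 < e < 1/2. Then there exists ε₀ > 0 such that for every ε ∈ (0, ε₀) the following holds. Define the graphon g by g(x,y) = 2e − ε if x < 1/2 < y or y < 1/2 < x, and g(x,y) = ε otherwise, and let λ₂ = [I₀'(2e−ε) − I₀'(ε)]/(6(e−ε)²). Then for every symmetric, square-integrable measurable function δg : [0,1]² → ℝ, 3λ₂·∫₀¹∫₀¹∫₀¹ g(x,y) δg(x,z) δg(y,z) dx dy dz + (1/2)·∫₀¹∫₀¹ I₀''(g(x,y)) δg(x,y)² dx dy ≥ (1/2)·∫₀¹∫₀¹ δg(x,y)² dx dy. -/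
open MeasureTheory Real Set Filter

/-- The perturbed bipartite graphon: `2e − ε` on `{x < 1/2 < y} ∪ {y < 1/2 < x}`
    and `ε` elsewhere. -/
noncomputable def gEps (e ε : ℝ) : ℝ → ℝ → ℝ := fun x y =>
  if (x < 1 / 2 ∧ 1 / 2 < y) ∨ (y < 1 / 2 ∧ 1 / 2 < x) then 2 * e - ε else ε

/-!
Fubini puts the `z`-integral outermost, so it suffices to prove the inequality for each column
`v = δg(·, z)` separately. Since `g = ε + (2e - 2ε)·𝟙[x, y on opposite halves]`, the cubic term of a
column is `ε (∫ v)² + 2 (2e - 2ε) (∫_L v)(∫_R v)`. The first summand is nonnegative; the cross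
term is absorbed, by Cauchy–Schwarz and AM–GM, into the slack `(I₀''(g(x,z)) - 1) v(x)²`, which is
`I₀''(ε) - 1 ≈ 1/(2ε)` on the half containing `z` and at least `1` on the other half. This needs
`λ₂ (2e - 2ε) = O(|log ε|)` to be small against `ε^(-1/2)`, which holds as `ε → 0⁺`.
-/

open Function Topology

section Integrals

variable {α β : Type*} [MeasurableSpace α] [MeasurableSpace β] {μ : Measure α} {ν : Measure β}

theorem sq_integral_le_integral_sq [IsProbabilityMeasure μ] {f : α → ℝ} (hf : MemLp f 2 μ) :
    (∫ x, f x ∂μ) ^ 2 ≤ ∫ x, f x ^ 2 ∂μ := by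
  have h := ProbabilityTheory.variance_nonneg f μ
  rw [ProbabilityTheory.variance_eq_sub hf] at h
  simpa [sub_nonneg] using h

theorem integral_integral_integral_eq_integral_integral_prod {γ : Type*} [MeasurableSpace γ]
    {ρ : Measure γ} [SFinite μ] [SFinite ν] [SFinite ρ] {F : α → β → γ → ℝ}
    (hF : Integrable (fun q : (α × β) × γ => F q.1.1 q.1.2 q.2) ((μ.prod ν).prod ρ)) :
    ∫ x, ∫ y, ∫ z, F x y z ∂ρ ∂ν ∂μ = ∫ z, ∫ p, F p.1 p.2 z ∂(μ.prod ν) ∂ρ := by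
  rw [integral_integral (f := fun x y => ∫ z, F x y z ∂ρ) hF.integral_prod_left]
  exact integral_integral_swap (f := fun (p : α × β) z => F p.1 p.2 z) hF

theorem integrable_mul_mul_of_memLp [IsProbabilityMeasure μ] [SFinite ν] {w : α → α → ℝ}
    {f : α → β → ℝ} {C : ℝ} (hw : Measurable (uncurry w)) (hwC : ∀ x y, |w x y| ≤ C)
    (hf : MemLp (uncurry f) 2 (μ.prod ν)) :
    Integrable (fun q : (α × α) × β => w q.1.1 q.1.2 * f q.1.1 q.2 * f q.1.2 q.2)
      ((μ.prod μ).prod ν) := by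
  have h₁ : MemLp (fun q : (α × α) × β => f q.1.1 q.2) 2 ((μ.prod μ).prod ν) :=
    hf.comp_measurePreserving (measurePreserving_fst.prod (MeasurePreserving.id ν))
  have h₂ : MemLp (fun q : (α × α) × β => f q.1.2 q.2) 2 ((μ.prod μ).prod ν) :=
    hf.comp_measurePreserving (measurePreserving_snd.prod (MeasurePreserving.id ν))
  simp_rw [mul_assoc]
  exact (h₁.integrable_mul h₂).bdd_mul (hw.comp measurable_fst).aestronglyMeasurable
    (ae_of_all _ fun q => hwC q.1.1 q.1.2)

end Integrals

theorem two_mul_mul_add_nonneg_of_sq_le {κ a b A B p q : ℝ} (ha : a ^ 2 ≤ A) (hb : b ^ 2 ≤ B)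
    (hp : 0 ≤ p) (hq : 0 ≤ q) (hκ : 4 * κ ^ 2 ≤ p * q) :
    0 ≤ 2 * κ * (a * b) + (p * A + q * B) / 2 := by
  have hA : 0 ≤ A := (sq_nonneg a).trans ha
  have hB : 0 ≤ B := (sq_nonneg b).trans hb
  have hS : 0 ≤ (p * A + q * B) / 2 := by positivity
  have hsq : (2 * κ * (a * b)) ^ 2 ≤ ((p * A + q * B) / 2) ^ 2 :=
    calc (2 * κ * (a * b)) ^ 2 = 4 * κ ^ 2 * (a ^ 2 * b ^ 2) := by ring
      _ ≤ p * q * (a ^ 2 * b ^ 2) := by gcongr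
      _ ≤ p * q * (A * B) := by gcongr
      _ ≤ ((p * A + q * B) / 2) ^ 2 := by nlinarith [sq_nonneg (p * A - q * B)]
  linarith [(abs_le_of_sq_le_sq' hsq hS).1]

section BlockGraphon

variable {μ : Measure ℝ} {e ε : ℝ}

theorem measurable_comp_gEps (φ : ℝ → ℝ) :
    Measurable fun p : ℝ × ℝ => φ (gEps e ε p.1 p.2) := by
  simp only [gEps, apply_ite φ]
  exact Measurable.ite (by measurability) measurable_const measurable_const

theorem abs_comp_gEps_le (φ : ℝ → ℝ) (x y : ℝ) :
    |φ (gEps e ε x y)| ≤ |φ (2 * e - ε)| + |φ ε| := by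
  unfold gEps
  split_ifs <;> simp

theorem gEps_mul_mul (v : ℝ → ℝ) (x y : ℝ) :
    gEps e ε x y * v x * v y = ε * (v x * v y)
      + (2 * e - 2 * ε) * ((Iio (1 / 2)).indicator v x * (Ioi (1 / 2)).indicator v y)
      + (2 * e - 2 * ε) * ((Ioi (1 / 2)).indicator v x * (Iio (1 / 2)).indicator v y) := by
  simp only [gEps, indicator, mem_Iio, mem_Ioi]
  split_ifs <;> first | (exfalso; grind) | ring

open Classical in
theorem exists_gEps_column_eq_ite {z : ℝ} (hz : z ≠ 1 / 2) :
    ∃ s t : Set ℝ, ((s = Iio (1 / 2) ∧ t = Ioi (1 / 2)) ∨ (s = Ioi (1 / 2) ∧ t = Iio (1 / 2))) ∧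
      ∀ x, gEps e ε x z = if x ∈ t then 2 * e - ε else ε := by
  rcases hz.lt_or_gt with hz | hz
  · refine ⟨_, _, Or.inl ⟨rfl, rfl⟩, fun x => ?_⟩
    simp only [gEps]
    congr 1
    grind
  · refine ⟨_, _, Or.inr ⟨rfl, rfl⟩, fun x => ?_⟩
    simp only [gEps]
    congr 1
    grind

theorem integral_gEps_mul_mul [SFinite μ] {v : ℝ → ℝ} (hv : Integrable v μ) :
    ∫ p, gEps e ε p.1 p.2 * v p.1 * v p.2 ∂(μ.prod μ) = ε * (∫ x, v x ∂μ) ^ 2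
      + 2 * (2 * e - 2 * ε) * ((∫ x, (Iio (1 / 2)).indicator v x ∂μ)
        * ∫ x, (Ioi (1 / 2)).indicator v x ∂μ) := by
  have hL := hv.indicator (measurableSet_Iio (a := (1 / 2 : ℝ)))
  have hR := hv.indicator (measurableSet_Ioi (a := (1 / 2 : ℝ)))
  have h₀ := (hv.mul_prod hv).const_mul ε
  have h₁ := (hL.mul_prod hR).const_mul (2 * e - 2 * ε)
  have h₂ := (hR.mul_prod hL).const_mul (2 * e - 2 * ε)
  simp_rw [gEps_mul_mul]
  rw [integral_add (h₀.fun_add h₁) h₂, integral_add h₀ h₁, integral_const_mul, integral_const_mul,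
    integral_const_mul, integral_prod_mul, integral_prod_mul, integral_prod_mul]
  ring

open Classical in
theorem integral_sq_indicator_add_le {s t : Set ℝ} (hs : MeasurableSet s) (ht : MeasurableSet t)
    (hst : Disjoint s t) {a b : ℝ} (ha : 0 ≤ a) {v : ℝ → ℝ}
    (hv : MemLp v 2 μ) :
    a * ∫ x, s.indicator v x ^ 2 ∂μ + b * ∫ x, t.indicator v x ^ 2 ∂μ
      ≤ ∫ x, (if x ∈ t then b else a) * v x ^ 2 ∂μ := by
  rw [← integral_const_mul, ← integral_const_mul,
    ← integral_add ((hv.indicator hs).integrable_sq.const_mul _)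
      ((hv.indicator ht).integrable_sq.const_mul _)]
  refine integral_mono ?_ ?_ fun x => ?_
  · exact ((hv.indicator hs).integrable_sq.const_mul _).add
      ((hv.indicator ht).integrable_sq.const_mul _)
  · exact hv.integrable_sq.bdd_mul
      (Measurable.ite ht measurable_const measurable_const).aestronglyMeasurable
      (ae_of_all _ fun x => show ‖_‖ ≤ |a| + |b| by split_ifs <;> simp)
  · by_cases hxt : x ∈ t
    · simp [hxt, Set.disjoint_right.1 hst hxt]
    · by_cases hxs : x ∈ s <;> simp [hxt, hxs]
      positivity

theorem gEps_column_second_variation_bound [IsProbabilityMeasure μ] {Λ : ℝ} (hΛ : 0 ≤ Λ)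
    (hε : 0 ≤ ε) (hα : 1 ≤ I0dd ε) (hβ : 1 ≤ I0dd (2 * e - ε))
    (hκ : 4 * (Λ * (2 * e - 2 * ε)) ^ 2 ≤ (I0dd ε - 1) * (I0dd (2 * e - ε) - 1))
    {z : ℝ} (hz : z ≠ 1 / 2) {v : ℝ → ℝ} (hv : MemLp v 2 μ) :
    (1 / 2) * ∫ x, v x ^ 2 ∂μ ≤ Λ * ∫ p, gEps e ε p.1 p.2 * v p.1 * v p.2 ∂(μ.prod μ)
      + (1 / 2) * ∫ x, I0dd (gEps e ε x z) * v x ^ 2 ∂μ := by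
  classical
  obtain ⟨s, t, hst, hcol⟩ := exists_gEps_column_eq_ite (e := e) (ε := ε) hz
  have hs : MeasurableSet s := by rcases hst with ⟨rfl, rfl⟩ | ⟨rfl, rfl⟩ <;> measurability
  have ht : MeasurableSet t := by rcases hst with ⟨rfl, rfl⟩ | ⟨rfl, rfl⟩ <;> measurability
  have hdisj : Disjoint s t := by
    rcases hst with ⟨rfl, rfl⟩ | ⟨rfl, rfl⟩
    exacts [Ioi_disjoint_Iio_same.symm, Ioi_disjoint_Iio_same]
  have hprod : (∫ x, s.indicator v x ∂μ) * (∫ x, t.indicator v x ∂μ)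
      = (∫ x, (Iio (1 / 2)).indicator v x ∂μ) * ∫ x, (Ioi (1 / 2)).indicator v x ∂μ := by
    rcases hst with ⟨rfl, rfl⟩ | ⟨rfl, rfl⟩
    exacts [rfl, mul_comm _ _]
  have hW : Integrable
      (fun x => (if x ∈ t then I0dd (2 * e - ε) - 1 else I0dd ε - 1) * v x ^ 2) μ :=
    hv.integrable_sq.bdd_mul
      (Measurable.ite ht measurable_const measurable_const).aestronglyMeasurable
      (ae_of_all _ fun x => show ‖_‖ ≤ |I0dd (2 * e - ε) - 1| + |I0dd ε - 1| by
        split_ifs <;> simp)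
  have hsplit : ∫ x, I0dd (gEps e ε x z) * v x ^ 2 ∂μ = ∫ x, v x ^ 2 ∂μ
      + ∫ x, (if x ∈ t then I0dd (2 * e - ε) - 1 else I0dd ε - 1) * v x ^ 2 ∂μ := by
    rw [← integral_add hv.integrable_sq hW]
    congr 1 with x
    rw [hcol, apply_ite I0dd]
    split_ifs <;> ring
  have hbound := integral_sq_indicator_add_le hs ht hdisj (sub_nonneg.2 hα)
    (b := I0dd (2 * e - ε) - 1) hv
  have key := two_mul_mul_add_nonneg_of_sq_le (sq_integral_le_integral_sq (hv.indicator hs))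
    (sq_integral_le_integral_sq (hv.indicator ht)) (sub_nonneg.2 hα) (sub_nonneg.2 hβ) hκ
  have hdiag : 0 ≤ Λ * (ε * (∫ x, v x ∂μ) ^ 2) := by positivity
  rw [integral_gEps_mul_mul (hv.integrable one_le_two), hsplit, ← hprod]
  linarith

theorem gEps_second_variation_bound [IsProbabilityMeasure μ] [NullSingletonClass μ] {Λ : ℝ}
    (hΛ : 0 ≤ Λ) (hε : 0 ≤ ε) (hα : 1 ≤ I0dd ε) (hβ : 1 ≤ I0dd (2 * e - ε))
    (hκ : 4 * (Λ * (2 * e - 2 * ε)) ^ 2 ≤ (I0dd ε - 1) * (I0dd (2 * e - ε) - 1))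
    {δg : ℝ → ℝ → ℝ} (hδ : Measurable (uncurry δg))
    (hδ2 : Integrable (fun p : ℝ × ℝ => δg p.1 p.2 ^ 2) (μ.prod μ)) :
    (1 / 2) * ∫ x, ∫ y, δg x y ^ 2 ∂μ ∂μ
      ≤ Λ * (∫ x, ∫ y, ∫ z, gEps e ε x y * δg x z * δg y z ∂μ ∂μ ∂μ)
        + (1 / 2) * ∫ x, ∫ y, I0dd (gEps e ε x y) * δg x y ^ 2 ∂μ ∂μ := by
  have hF := integrable_mul_mul_of_memLp (measurable_comp_gEps (e := e) (ε := ε) id)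
    (abs_comp_gEps_le id) ((memLp_two_iff_integrable_sq hδ.aestronglyMeasurable).2 hδ2)
  have hI : Integrable (fun p : ℝ × ℝ => I0dd (gEps e ε p.1 p.2) * δg p.1 p.2 ^ 2) (μ.prod μ) :=
    hδ2.bdd_mul (measurable_comp_gEps I0dd).aestronglyMeasurable
      (ae_of_all _ fun p => abs_comp_gEps_le I0dd p.1 p.2)
  rw [integral_integral_integral_eq_integral_integral_prod hF,
    integral_integral_swap (f := fun x y => I0dd (gEps e ε x y) * δg x y ^ 2) hI,
    integral_integral_swap (f := fun x y => δg x y ^ 2) hδ2,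
    ← integral_const_mul, ← integral_const_mul, ← integral_const_mul,
    ← integral_add (hF.integral_prod_right.const_mul _) (hI.integral_prod_right.const_mul _)]
  refine integral_mono_ae (hδ2.integral_prod_right.const_mul _)
    ((hF.integral_prod_right.const_mul _).add (hI.integral_prod_right.const_mul _)) ?_
  filter_upwards [Measure.ae_ne μ (1 / 2), hδ2.prod_left_ae] with z hz hz2
  exact gEps_column_second_variation_bound hΛ hε hα hβ hκ hz ((memLp_two_iff_integrable_sq
    (hδ.comp measurable_prodMk_right).aestronglyMeasurable).2 hz2)

end BlockGraphon

theorem two_le_I0dd {u : ℝ} (h0 : 0 < u) (h1 : u < 1) : 2 ≤ I0dd u := by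
  have h1u : 0 < 1 - u := by linarith
  have h4 : 4 ≤ 1 / u + 1 / (1 - u) := by
    rw [div_add_div _ _ h0.ne' h1u.ne', le_div_iff₀ (mul_pos h0 h1u)]
    nlinarith [sq_nonneg (2 * u - 1)]
  unfold I0dd
  linarith

theorem I0d_le_I0d {a b : ℝ} (ha : 0 < a) (hab : a ≤ b) (hb : b < 1) : I0d a ≤ I0d b := by
  unfold I0d
  have h₁ := Real.log_le_log ha hab
  have h₂ := Real.log_le_log (by linarith : 0 < 1 - b) (by linarith : 1 - b ≤ 1 - a)
  linarith

theorem tendsto_sqrt_mul_I0d_sub_I0d {a : ℝ} (ha0 : a ≠ 0) (ha1 : a ≠ 1) :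
    Tendsto (fun ε => √ε * (I0d (a - ε) - I0d ε)) (𝓝[>] 0) (𝓝 0) := by
  have hc : ContinuousAt (fun ε => √ε * (I0d (a - ε) + Real.log (1 - ε) / 2)) 0 := by
    unfold I0d
    fun_prop (disch := simp [ha0, sub_ne_zero.2 ha1.symm])
  have hlog := (tendsto_log_mul_rpow_nhdsGT_zero (r := 1 / 2) one_half_pos).div_const 2
  have h := (hc.tendsto.mono_left nhdsWithin_le_nhds).sub hlog
  simp only [Real.sqrt_zero, zero_mul, zero_div, sub_zero] at h
  refine h.congr' (eventually_nhdsWithin_of_forall fun ε (hε : 0 < ε) => ?_)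
  rw [← Real.sqrt_eq_rpow]
  unfold I0d
  ring

theorem eventually_four_mul_sq_I0d_sub_le {e : ℝ} (he0 : 0 < e) (he : e < 1 / 2) :
    ∀ᶠ ε in 𝓝[>] 0, 4 * (I0d (2 * e - ε) - I0d ε) ^ 2 ≤ (e - ε) ^ 2 * (I0dd ε - 1) := by
  have hsmall : Tendsto (fun ε => 4 * (√ε * (I0d (2 * e - ε) - I0d ε)) ^ 2) (𝓝[>] 0) (𝓝 0) := by
    simpa using ((tendsto_sqrt_mul_I0d_sub_I0d (a := 2 * e) (by positivity)
      (by linarith)).pow 2).const_mul 4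
  have hc : ContinuousAt (fun ε => (e - ε) ^ 2 * ((1 + ε / (1 - ε)) / 2 - ε)) 0 := by
    fun_prop (disch := norm_num)
  have hlarge := hc.tendsto.mono_left (nhdsWithin_le_nhds (s := Ioi 0))
  simp only [sub_zero, zero_div, add_zero] at hlarge
  have hpos : 0 < e ^ 2 * (1 / 2 : ℝ) := by positivity
  filter_upwards [hsmall.eventually (gt_mem_nhds (half_pos hpos)),
    hlarge.eventually (lt_mem_nhds (half_lt_self hpos)), self_mem_nhdsWithin,
    nhdsWithin_le_nhds (Iio_mem_nhds one_pos)] with ε h₁ h₂ (hε : 0 < ε) (hε1 : ε < 1)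
  have hsq : 4 * (√ε * (I0d (2 * e - ε) - I0d ε)) ^ 2
      = ε * (4 * (I0d (2 * e - ε) - I0d ε) ^ 2) := by
    rw [mul_pow, Real.sq_sqrt hε.le]
    ring
  have hI0dd : (e - ε) ^ 2 * ((1 + ε / (1 - ε)) / 2 - ε)
      = ε * ((e - ε) ^ 2 * (I0dd ε - 1)) := by
    have : 1 - ε ≠ 0 := by linarith
    unfold I0dd
    field_simp
  exact (lt_of_mul_lt_mul_left (by linarith) hε.le).le

instance : IsProbabilityMeasure (volume.restrict (Icc (0 : ℝ) 1)) :=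
  ⟨by rw [Measure.restrict_apply_univ, Real.volume_Icc]; norm_num⟩

/-- second-variation bound. For `e < 1/2` and all sufficiently
    small `ε > 0`, for every symmetric square-integrable `δg`,
    `3λ₂ ∭ g δg δg + (1/2) ∬ I₀''(g) δg² ≥ (1/2) ∬ δg²`. -/
theorem second_variation_bound (e : ℝ) (he0 : 0 < e) (he : e < 1 / 2) :
    ∃ ε₀ > 0, ∀ ε : ℝ, 0 < ε → ε < ε₀ →
      ∀ δg : ℝ → ℝ → ℝ, Measurable (Function.uncurry δg) →
        (∀ x y, δg x y = δg y x) →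
        IntegrableOn (fun q : ℝ × ℝ => (δg q.1 q.2) ^ 2) (Icc (0 : ℝ) 1 ×ˢ Icc (0 : ℝ) 1) →
        3 * ((I0d (2 * e - ε) - I0d ε) / (6 * (e - ε) ^ 2)) *
            (∫ x in Icc (0 : ℝ) 1, ∫ y in Icc (0 : ℝ) 1, ∫ z in Icc (0 : ℝ) 1,
              gEps e ε x y * δg x z * δg y z) +
          (1 / 2) * (∫ x in Icc (0 : ℝ) 1, ∫ y in Icc (0 : ℝ) 1,
              I0dd (gEps e ε x y) * (δg x y) ^ 2) ≥
        (1 / 2) * (∫ x in Icc (0 : ℝ) 1, ∫ y in Icc (0 : ℝ) 1, (δg x y) ^ 2) := by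
  obtain ⟨ε₀, hε₀, hsmall⟩ := mem_nhdsGT_iff_exists_Ioo_subset.1
    ((eventually_four_mul_sq_I0d_sub_le he0 he).and (nhdsWithin_le_nhds (gt_mem_nhds he0)))
  refine ⟨ε₀, hε₀, fun ε hε hεε₀ δg hδ _ hδ2 => ?_⟩
  obtain ⟨hG, hεe⟩ : _ ∧ ε < e := hsmall ⟨hε, hεε₀⟩
  have hα := two_le_I0dd hε (by linarith)
  have hβ := two_le_I0dd (by linarith : 0 < 2 * e - ε) (by linarith)
  have hee : 0 < e - ε := by linarith
  have hΛc : 3 * ((I0d (2 * e - ε) - I0d ε) / (6 * (e - ε) ^ 2)) * (2 * e - 2 * ε)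
      = (I0d (2 * e - ε) - I0d ε) / (e - ε) := by
    field_simp
    ring
  have hΛ : 0 ≤ 3 * ((I0d (2 * e - ε) - I0d ε) / (6 * (e - ε) ^ 2)) := by
    have := I0d_le_I0d hε (by linarith : ε ≤ 2 * e - ε) (by linarith)
    positivity
  refine gEps_second_variation_bound hΛ hε.le (by linarith) (by linarith) ?_ hδ ?_
  · calc 4 * (3 * ((I0d (2 * e - ε) - I0d ε) / (6 * (e - ε) ^ 2)) * (2 * e - 2 * ε)) ^ 2
        = 4 * (I0d (2 * e - ε) - I0d ε) ^ 2 / (e - ε) ^ 2 := by rw [hΛc, div_pow]; ring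
      _ ≤ I0dd ε - 1 := by rw [div_le_iff₀ (by positivity)]; linarith
      _ ≤ (I0dd ε - 1) * (I0dd (2 * e - ε) - 1) :=
        le_mul_of_one_le_right (by linarith) (by linarith)
  · rwa [IntegrableOn, Measure.volume_eq_prod, ← Measure.prod_restrict] at hδ2
end
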